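/- Let M, N ≥ 1 be integers and let φ_1, …, φ_M : ℝ^{d_θ} × ℝ^{d_x} → ℝ each be differentiable with L-Lipschitz gradient on ℝ^{d_θ} × ℝ^{d_x}, for some L > 0. Define Φ : ℝ^{d_θ} × (ℝ^{d_x})^{M×N} → ℝ by Φ(θ, z^{1:M,1:N}) = Σ_{m=1}^M Σ_{n=1}^N φ_m(θ, √(MN)·z^{m,n}). Then Φ is differentiable and its gradient is (MNL)-Lipschitz on ℝ^{d_θ} × (ℝ^{d_x})^{M×N}. -/

import Mathlib

/-!
Write `Φ = ψ ∘ S`, where `S q = (θ, √(MN) z^{m,n})_{m,n}` is linear into the `ℓ²`-product of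
`MN` copies of `ℝ^{d_θ} × ℝ^{d_x}` and `ψ y = ∑_{m,n} φ_m (y_{m,n})` is separable. The gradient of
`ψ` is taken componentwise, so it is `L`-Lipschitz on the `ℓ²`-product, and `∇(ψ ∘ S) = S† ∘ ∇ψ ∘ S`
is then `L‖S‖²`-Lipschitz. Finally `‖S q‖² = MN ‖θ‖² + MN ∑ ‖z^{m,n}‖² = MN ‖q‖²`, so `‖S‖² ≤ MN`.
-/

open Real

/-- Embed a pair (θ, x) into the Euclidean space indexed by the sum type,
carrying the Euclidean norm ‖(θ,x)‖² = ‖θ‖² + ‖x‖². -/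
noncomputable def sumPair {dθ dx : ℕ} (θ : EuclideanSpace ℝ (Fin dθ))
    (x : EuclideanSpace ℝ (Fin dx)) : EuclideanSpace ℝ (Fin dθ ⊕ Fin dx) :=
  (WithLp.equiv 2 _).symm (Sum.elim (fun i => θ i) (fun j => x j))

/-- Extract the θ-component of a point of ℝ^{d_θ} × (ℝ^{d_x})^{M×N}. -/
noncomputable def thetaPart {dθ dx M N : ℕ}
    (q : EuclideanSpace ℝ (Fin dθ ⊕ (Fin M × Fin N) × Fin dx)) :
    EuclideanSpace ℝ (Fin dθ) :=
  (WithLp.equiv 2 _).symm (fun i => q (Sum.inl i))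

/-- Extract the (m,n)-th latent block z^{m,n} ∈ ℝ^{d_x}. -/
noncomputable def zPart {dθ dx M N : ℕ}
    (q : EuclideanSpace ℝ (Fin dθ ⊕ (Fin M × Fin N) × Fin dx)) (m : Fin M) (n : Fin N) :
    EuclideanSpace ℝ (Fin dx) :=
  (WithLp.equiv 2 _).symm (fun j => q (Sum.inr ((m, n), j)))

/-- Φ(θ, z^{1:M,1:N}) = Σ_m Σ_n φ_m(θ, √(MN) z^{m,n}). -/
noncomputable def bigPhi {dθ dx M N : ℕ}
    (φ : Fin M → EuclideanSpace ℝ (Fin dθ ⊕ Fin dx) → ℝ)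
    (q : EuclideanSpace ℝ (Fin dθ ⊕ (Fin M × Fin N) × Fin dx)) : ℝ :=
  ∑ m : Fin M, ∑ n : Fin N,
    φ m (sumPair (thetaPart q) (Real.sqrt (M * N) • zPart q m n))

open InnerProductSpace
open scoped NNReal InnerProduct

section CompContinuousLinearMap

variable {E F : Type*} [NormedAddCommGroup E] [InnerProductSpace ℝ E] [CompleteSpace E]
  [NormedAddCommGroup F] [InnerProductSpace ℝ F] [CompleteSpace F]

theorem HasGradientAt.comp_continuousLinearMap {ψ : F → ℝ} {g : F} {x : E} (A : E →L[ℝ] F)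
    (h : HasGradientAt ψ g (A x)) : HasGradientAt (ψ ∘ A) ((A†) g) x := by
  have hA : toDual ℝ E ((A†) g) = (toDual ℝ F g).comp A := by
    ext v
    simp [ContinuousLinearMap.adjoint_inner_left]
  rw [hasGradientAt_iff_hasFDerivAt, hA]
  exact h.hasFDerivAt.comp x A.hasFDerivAt

theorem gradient_comp_continuousLinearMap {ψ : F → ℝ} (hψ : Differentiable ℝ ψ)
    (A : E →L[ℝ] F) : gradient (ψ ∘ A) = fun x ↦ (A†) (gradient ψ (A x)) :=
  gradient_eq fun x ↦ HasGradientAt.comp_continuousLinearMap A (hψ (A x)).hasGradientAt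

theorem LipschitzWith.gradient_comp_continuousLinearMap {ψ : F → ℝ} {K : ℝ≥0}
    (hψ : Differentiable ℝ ψ) (hK : LipschitzWith K (gradient ψ)) (A : E →L[ℝ] F) :
    LipschitzWith (‖A‖₊ ^ 2 * K) (gradient (ψ ∘ A)) := by
  have h := (A†.lipschitz.comp hK).comp A.lipschitz
  rw [LinearIsometryEquiv.nnnorm_map, mul_right_comm, ← sq] at h
  rw [_root_.gradient_comp_continuousLinearMap hψ A]
  exact h

end CompContinuousLinearMap

section PiLp

variable {ι : Type*} [Fintype ι]

theorem LipschitzWith.piLp_map {F G : ι → Type*} [∀ i, SeminormedAddCommGroup (F i)]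
    [∀ i, SeminormedAddCommGroup (G i)] {f : ∀ i, F i → G i} {K : ℝ≥0}
    (hf : ∀ i, LipschitzWith K (f i)) :
    LipschitzWith K fun y : PiLp 2 F ↦ WithLp.toLp 2 fun i ↦ f i (y i) := by
  refine LipschitzWith.of_dist_le_mul fun y y' ↦ le_of_sq_le_sq ?_ (by positivity)
  calc dist (WithLp.toLp 2 fun i ↦ f i (y i)) (WithLp.toLp 2 fun i ↦ f i (y' i)) ^ 2
      = ∑ i, dist (f i (y i)) (f i (y' i)) ^ 2 := PiLp.dist_sq_eq_of_L2 _ _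
    _ ≤ ∑ i, (K * dist (y i) (y' i)) ^ 2 := by
      gcongr with i
      exact (hf i).dist_le_mul _ _
    _ = (K * dist y y') ^ 2 := by
      simp only [mul_pow, PiLp.dist_sq_eq_of_L2 y y', Finset.mul_sum]

variable {F : ι → Type*} [∀ i, NormedAddCommGroup (F i)] [∀ i, InnerProductSpace ℝ (F i)]
  [∀ i, CompleteSpace (F i)]

theorem hasGradientAt_piLp_sum {φ : ∀ i, F i → ℝ} {g : ∀ i, F i} {y : PiLp 2 F}
    (h : ∀ i, HasGradientAt (φ i) (g i) (y i)) :
    HasGradientAt (fun y : PiLp 2 F ↦ ∑ i, φ i (y i)) (WithLp.toLp 2 g) y := by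
  have hg : toDual ℝ (PiLp 2 F) (WithLp.toLp 2 g) =
      ∑ i, (toDual ℝ (F i) (g i)).comp (PiLp.proj 2 F i) := by
    ext v
    simp [PiLp.inner_apply]
  rw [hasGradientAt_iff_hasFDerivAt, hg]
  exact HasFDerivAt.fun_sum fun i _ ↦ (h i).hasFDerivAt.comp y (PiLp.proj 2 F i).hasFDerivAt

theorem gradient_piLp_sum {φ : ∀ i, F i → ℝ} (hφ : ∀ i, Differentiable ℝ (φ i)) :
    gradient (fun y : PiLp 2 F ↦ ∑ i, φ i (y i)) =
      fun y ↦ WithLp.toLp 2 fun i ↦ gradient (φ i) (y i) :=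
  gradient_eq fun _ ↦ hasGradientAt_piLp_sum fun i ↦ (hφ i _).hasGradientAt

end PiLp

section Stack

variable {dθ dx M N : ℕ}

theorem norm_sumPair_sq (θ : EuclideanSpace ℝ (Fin dθ)) (x : EuclideanSpace ℝ (Fin dx)) :
    ‖sumPair θ x‖ ^ 2 = ‖θ‖ ^ 2 + ‖x‖ ^ 2 := by
  simp [EuclideanSpace.norm_sq_eq, sumPair]

theorem norm_sq_eq_thetaPart_add_zPart (q : EuclideanSpace ℝ (Fin dθ ⊕ (Fin M × Fin N) × Fin dx)) :
    ‖q‖ ^ 2 = ‖thetaPart q‖ ^ 2 + ∑ m, ∑ n, ‖zPart q m n‖ ^ 2 := by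
  simp [EuclideanSpace.norm_sq_eq, thetaPart, zPart, Fintype.sum_prod_type]

noncomputable def stackLinearMap (dθ dx M N : ℕ) :
    EuclideanSpace ℝ (Fin dθ ⊕ (Fin M × Fin N) × Fin dx) →ₗ[ℝ]
      PiLp 2 (fun _ : Fin M × Fin N ↦ EuclideanSpace ℝ (Fin dθ ⊕ Fin dx)) where
  toFun q := WithLp.toLp 2 fun p ↦ sumPair (thetaPart q) (√(M * N) • zPart q p.1 p.2)
  map_add' q q' := by
    ext p (i | j)
    · simp [sumPair, thetaPart]
    · simp [sumPair, zPart, mul_add]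
  map_smul' c q := by
    ext p (i | j)
    · simp [sumPair, thetaPart]
    · simp [sumPair, zPart, mul_left_comm]

theorem norm_stackLinearMap_apply (q : EuclideanSpace ℝ (Fin dθ ⊕ (Fin M × Fin N) × Fin dx)) :
    ‖stackLinearMap dθ dx M N q‖ = √(M * N) * ‖q‖ := by
  have hMN : (0 : ℝ) ≤ M * N := by positivity
  refine (sq_eq_sq₀ (norm_nonneg _) (by positivity)).1 ?_
  calc ‖stackLinearMap dθ dx M N q‖ ^ 2
      = ∑ m : Fin M, ∑ n : Fin N, (‖thetaPart q‖ ^ 2 + M * N * ‖zPart q m n‖ ^ 2) := by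
        rw [PiLp.norm_sq_eq_of_L2, Fintype.sum_prod_type]
        simp only [stackLinearMap, LinearMap.coe_mk, AddHom.coe_mk, norm_sumPair_sq, norm_smul,
          mul_pow, Real.norm_eq_abs, sq_abs, Real.sq_sqrt hMN]
    _ = M * N * ‖q‖ ^ 2 := by
        simp only [norm_sq_eq_thetaPart_add_zPart q, Finset.sum_add_distrib, Finset.sum_const,
          Finset.card_univ, Fintype.card_fin, nsmul_eq_mul, ← Finset.mul_sum]
        ring
    _ = (√(M * N) * ‖q‖) ^ 2 := by rw [mul_pow, Real.sq_sqrt hMN]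

noncomputable def stackMap (dθ dx M N : ℕ) :
    EuclideanSpace ℝ (Fin dθ ⊕ (Fin M × Fin N) × Fin dx) →L[ℝ]
      PiLp 2 (fun _ : Fin M × Fin N ↦ EuclideanSpace ℝ (Fin dθ ⊕ Fin dx)) :=
  (stackLinearMap dθ dx M N).mkContinuous √(M * N) fun q ↦ (norm_stackLinearMap_apply q).le

theorem norm_stackMap_sq_le : ‖stackMap dθ dx M N‖ ^ 2 ≤ (M * N : ℝ) := by
  calc ‖stackMap dθ dx M N‖ ^ 2 ≤ √(M * N : ℝ) ^ 2 := by
        gcongr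
        exact LinearMap.mkContinuous_norm_le _ (Real.sqrt_nonneg _) _
    _ = (M * N : ℝ) := Real.sq_sqrt (by positivity)

theorem bigPhi_eq_comp_stackMap (φ : Fin M → EuclideanSpace ℝ (Fin dθ ⊕ Fin dx) → ℝ) :
    (bigPhi φ : EuclideanSpace ℝ (Fin dθ ⊕ (Fin M × Fin N) × Fin dx) → ℝ) =
      (fun y : PiLp 2 (fun _ : Fin M × Fin N ↦ EuclideanSpace ℝ (Fin dθ ⊕ Fin dx)) ↦
        ∑ p, φ p.1 (y p)) ∘ stackMap dθ dx M N := by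
  ext q
  simp [bigPhi, stackMap, stackLinearMap, Fintype.sum_prod_type]

end Stack

theorem stmt1_general (dθ dx M N : ℕ) (L : ℝ) (hL : 0 < L)
    (φ : Fin M → EuclideanSpace ℝ (Fin dθ ⊕ Fin dx) → ℝ)
    (hdiff : ∀ m, Differentiable ℝ (φ m))
    (hlip : ∀ m, ∀ p q : EuclideanSpace ℝ (Fin dθ ⊕ Fin dx),
      ‖gradient (φ m) p - gradient (φ m) q‖ ≤ L * ‖p - q‖) :
    Differentiable ℝ (bigPhi φ : EuclideanSpace ℝ (Fin dθ ⊕ (Fin M × Fin N) × Fin dx) → ℝ) ∧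
      ∀ q q' : EuclideanSpace ℝ (Fin dθ ⊕ (Fin M × Fin N) × Fin dx),
        ‖gradient (bigPhi φ) q - gradient (bigPhi φ) q'‖ ≤ (M * N * L) * ‖q - q'‖ := by
  set A := stackMap dθ dx M N
  set ψ := fun y : PiLp 2 (fun _ : Fin M × Fin N ↦ EuclideanSpace ℝ (Fin dθ ⊕ Fin dx)) ↦
    ∑ p, φ p.1 (y p)
  have hψ : Differentiable ℝ ψ := fun y ↦
    (hasGradientAt_piLp_sum fun p ↦ (hdiff p.1 (y p)).hasGradientAt).differentiableAt
  have hψ_lip : LipschitzWith L.toNNReal (gradient ψ) := by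
    rw [show gradient ψ = _ from
      gradient_piLp_sum (φ := fun p : Fin M × Fin N ↦ φ p.1) fun p ↦ hdiff p.1]
    refine LipschitzWith.piLp_map fun p ↦ LipschitzWith.of_dist_le_mul fun x y ↦ ?_
    simpa only [dist_eq_norm, Real.coe_toNNReal _ hL.le] using hlip p.1 x y
  rw [bigPhi_eq_comp_stackMap]
  refine ⟨hψ.comp A.differentiable, fun q q' ↦ ?_⟩
  calc ‖gradient (ψ ∘ A) q - gradient (ψ ∘ A) q'‖
      ≤ ‖A‖ ^ 2 * L * ‖q - q'‖ := by
        simpa only [dist_eq_norm, NNReal.coe_mul, NNReal.coe_pow, coe_nnnorm,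
          Real.coe_toNNReal _ hL.le] using
          (hψ_lip.gradient_comp_continuousLinearMap hψ A).dist_le_mul q q'
    _ ≤ M * N * L * ‖q - q'‖ := by
        gcongr
        exact norm_stackMap_sq_le

/-- If each φ_m is differentiable with L-Lipschitz gradient jointly in (θ, x), then
Φ(θ, z) = Σ_{m,n} φ_m(θ, √(MN) z^{m,n}) is differentiable with (MNL)-Lipschitz gradient. -/
theorem stmt1 (dθ dx M N : ℕ) (hM : 1 ≤ M) (hN : 1 ≤ N) (L : ℝ) (hL : 0 < L)
    (φ : Fin M → EuclideanSpace ℝ (Fin dθ ⊕ Fin dx) → ℝ)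
    (hdiff : ∀ m, Differentiable ℝ (φ m))
    (hlip : ∀ m, ∀ p q : EuclideanSpace ℝ (Fin dθ ⊕ Fin dx),
      ‖gradient (φ m) p - gradient (φ m) q‖ ≤ L * ‖p - q‖) :
    Differentiable ℝ (bigPhi φ : EuclideanSpace ℝ (Fin dθ ⊕ (Fin M × Fin N) × Fin dx) → ℝ) ∧
      ∀ q q' : EuclideanSpace ℝ (Fin dθ ⊕ (Fin M × Fin N) × Fin dx),
        ‖gradient (bigPhi φ) q - gradient (bigPhi φ) q'‖ ≤ (M * N * L) * ‖q - q'‖ :=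
  stmt1_general dθ dx M N L hL φ hdiff hlip
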